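/- Let V : ℂ^D → ℂ^L ⊗ ℂ^S be an isometry, M_z := V†(|z⟩⟨z| ⊗ Id_S)V, and compress(V) := Σ_z |z⟩ ⊗ √(M_z). Then for every f : [L] → {±1}, writing O_f := Σ_z f(z)|z⟩⟨z|, we have compress(V)†·(O_f ⊗ Id_D)·compress(V) = V†·(O_f ⊗ Id_S)·V. -/

import Mathlib

/-!
Decomposing `O_f ⊗ Id` as `∑ z, f z • (|z⟩⟨z| ⊗ Id)` reduces both sides to `∑ z, f z • M z`:
on the right by definition of `M z`, and on the left because the `z`-th block row of
`compress(V)` is the Hermitian square root `Q z`, so that its contribution is `(Q z)ᴴ * Q z = M z`.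
-/

open Matrix
open scoped ComplexOrder

namespace Matrix

variable {m n ι κ α : Type*} [Fintype ι] [DecidableEq ι] [DecidableEq κ]

theorem diagonal_comp_fst_eq_sum [Semiring α] (f : ι → α) :
    diagonal (fun p : ι × κ => f p.1)
      = ∑ z, f z • diagonal fun p : ι × κ => if p.1 = z then (1 : α) else 0 := by
  ext p q
  by_cases h : p = q
  · subst h
    simp [sum_apply]
  · simp [sum_apply, diagonal_apply_ne _ h]

variable [Fintype κ]

theorem mul_diagonal_comp_fst_mul_eq_sum [CommSemiring α] [Fintype n]
    (A : Matrix m (ι × κ) α) (B : Matrix (ι × κ) n α) (f : ι → α) :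
    A * diagonal (fun p : ι × κ => f p.1) * B
      = ∑ z, f z • (A * (diagonal fun p : ι × κ => if p.1 = z then (1 : α) else 0) * B) := by
  simp only [diagonal_comp_fst_eq_sum f, Matrix.mul_sum, Matrix.sum_mul, Matrix.mul_smul,
    Matrix.smul_mul]

theorem conjTranspose_mul_diagonal_ite_fst_mul [CommSemiring α] [StarRing α]
    {C : Matrix (ι × κ) n α} {Q : ι → Matrix κ n α}
    (hC : ∀ z d u, C (z, d) u = Q z d u) (z : ι) :
    Cᴴ * (diagonal fun p : ι × κ => if p.1 = z then (1 : α) else 0) * C = (Q z)ᴴ * Q z := by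
  ext i j
  simp [mul_apply, diagonal_apply, Fintype.sum_prod_type, hC]

end Matrix

theorem compress_compresses_general (D L S : ℕ)
    (V : Matrix (Fin L × Fin S) (Fin D) ℂ)
    (M : Fin L → Matrix (Fin D) (Fin D) ℂ)
    (hM : ∀ z, M z =
      Vᴴ * (Matrix.diagonal fun p : Fin L × Fin S => if p.1 = z then (1 : ℂ) else 0) * V)
    (Q : Fin L → Matrix (Fin D) (Fin D) ℂ)
    (hQ : ∀ z, (Q z).PosSemidef ∧ Q z * Q z = M z)
    (C : Matrix (Fin L × Fin D) (Fin D) ℂ)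
    (hC : ∀ z d u, C (z, d) u = Q z d u)
    (f : Fin L → ℂ) :
    Cᴴ * (Matrix.diagonal fun p : Fin L × Fin D => f p.1) * C
      = Vᴴ * (Matrix.diagonal fun p : Fin L × Fin S => f p.1) * V := by
  rw [mul_diagonal_comp_fst_mul_eq_sum, mul_diagonal_comp_fst_mul_eq_sum]
  refine Finset.sum_congr rfl fun z _ => ?_
  rw [conjTranspose_mul_diagonal_ite_fst_mul hC, (hQ z).1.isHermitian.eq, (hQ z).2, hM]

/-- `compress` compresses: for every sign function `f : [L] → {±1}`,
`compress(V)†·(O_f ⊗ Id_D)·compress(V) = V†·(O_f ⊗ Id_S)·V`. -/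
theorem compress_compresses (D L S : ℕ)
    (V : Matrix (Fin L × Fin S) (Fin D) ℂ) (hV : Vᴴ * V = 1)
    (M : Fin L → Matrix (Fin D) (Fin D) ℂ)
    (hM : ∀ z, M z =
      Vᴴ * (Matrix.diagonal fun p : Fin L × Fin S => if p.1 = z then (1 : ℂ) else 0) * V)
    (Q : Fin L → Matrix (Fin D) (Fin D) ℂ)
    (hQ : ∀ z, (Q z).PosSemidef ∧ Q z * Q z = M z)
    (C : Matrix (Fin L × Fin D) (Fin D) ℂ)
    (hC : ∀ z d u, C (z, d) u = Q z d u)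
    (f : Fin L → ℂ) (hf : ∀ z, f z = 1 ∨ f z = -1) :
    Cᴴ * (Matrix.diagonal fun p : Fin L × Fin D => f p.1) * C
      = Vᴴ * (Matrix.diagonal fun p : Fin L × Fin S => f p.1) * V :=
  compress_compresses_general D L S V M hM Q hQ C hC f
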